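/- arXiv:2101.09726 — 3 statements merged into one kernel-verified Lean document; each statement's English description precedes it below -/
import Mathlib

section
/- Let n ≥ 1, p ∈ (1,∞), let q, d ∈ ℝⁿ with q ≠ 0, write q̂ = q/|q|, and let X ∈ Sⁿ be decomposed as X = X⁺ − X⁻ with X⁺, X⁻ positive semidefinite and X⁺X⁻ = 0. If Tr(X) + (p − 2)⟨X q̂, q̂⟩ + (log|q|)·⟨d, q⟩ ≥ 0, then max{1, p−1}·Tr(X⁺) − min{1, p−1}·Tr(X⁻) + |d|·|q|·|log|q|| ≥ 0. -/
/-!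
Put `v = q / |q|`, so `|v| ≤ 1`. Writing a positive semidefinite `A` as a sum of rank-one
matrices `u uᵀ` and applying Cauchy–Schwarz to each gives `0 ≤ ⟨A v, v⟩ ≤ Tr A`. Applied to `X⁺`
and `X⁻`, this bounds `Tr X + (p - 2)⟨X v, v⟩` by `max 1 (p - 1) Tr X⁺ - min 1 (p - 1) Tr X⁻`,
whatever the sign of `p - 2`; Cauchy–Schwarz bounds the logarithmic term by `|d| |q| |log |q||`.
-/

open Matrix

theorem dotProduct_sq_le_dotProduct_self_mul {n : Type*} [Fintype n] (u v : n → ℝ) :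
    (u ⬝ᵥ v) ^ 2 ≤ (u ⬝ᵥ u) * (v ⬝ᵥ v) := by
  simpa only [dotProduct, sq] using Finset.sum_mul_sq_le_sq_mul_sq Finset.univ u v

namespace Matrix

variable {n : Type*} [Fintype n]

theorem sum_sum_mul_mul_eq_dotProduct_mulVec (A : Matrix n n ℝ) (v : n → ℝ) :
    ∑ i, ∑ j, A i j * v i * v j = v ⬝ᵥ A *ᵥ v := by
  simp only [dotProduct, mulVec, Finset.mul_sum]
  exact Finset.sum_congr rfl fun i _ => Finset.sum_congr rfl fun j _ => by ring

theorem PosSemidef.dotProduct_mulVec_le_trace_mul {A : Matrix n n ℝ} (hA : A.PosSemidef)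
    (v : n → ℝ) : v ⬝ᵥ A *ᵥ v ≤ A.trace * (v ⬝ᵥ v) := by
  obtain ⟨m, u, rfl⟩ := posSemidef_iff_eq_sum_vecMulVec.mp hA
  simp only [sum_mulVec, dotProduct_sum, trace_sum, Finset.sum_mul, star_trivial,
    vecMulVec_mulVec, trace_vecMulVec]
  refine Finset.sum_le_sum fun k _ => ?_
  simpa [dotProduct_smul, dotProduct_comm v, sq] using dotProduct_sq_le_dotProduct_self_mul (u k) v

theorem PosSemidef.dotProduct_mulVec_le_trace {A : Matrix n n ℝ} (hA : A.PosSemidef)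
    {v : n → ℝ} (hv : v ⬝ᵥ v ≤ 1) : v ⬝ᵥ A *ᵥ v ≤ A.trace :=
  (hA.dotProduct_mulVec_le_trace_mul v).trans (mul_le_of_le_one_right hA.trace_nonneg hv)

theorem trace_add_mul_dotProduct_mulVec_le_pucci {P N : Matrix n n ℝ} (hP : P.PosSemidef)
    (hN : N.PosSemidef) (p : ℝ) {v : n → ℝ} (hv : v ⬝ᵥ v ≤ 1) :
    (P - N).trace + (p - 2) * (v ⬝ᵥ (P - N) *ᵥ v)
      ≤ max 1 (p - 1) * P.trace - min 1 (p - 1) * N.trace := by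
  have hP0 : 0 ≤ v ⬝ᵥ P *ᵥ v := by simpa using hP.dotProduct_mulVec_nonneg v
  have hN0 : 0 ≤ v ⬝ᵥ N *ᵥ v := by simpa using hN.dotProduct_mulVec_nonneg v
  have hP1 := hP.dotProduct_mulVec_le_trace hv
  have hN1 := hN.dotProduct_mulVec_le_trace hv
  rw [trace_sub, sub_mulVec, dotProduct_sub]
  rcases le_total 2 p with hp | hp
  · rw [max_eq_right (by linarith), min_eq_left (by linarith)]
    nlinarith
  · rw [max_eq_left (by linarith), min_eq_right (by linarith)]
    nlinarith

end Matrix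

theorem dotProduct_self_div_norm_le_one {n : Type*} [Fintype n]
    (q : EuclideanSpace ℝ n) : (fun i => q i / ‖q‖) ⬝ᵥ (fun i => q i / ‖q‖) ≤ 1 := by
  have : (fun i => q i / ‖q‖) ⬝ᵥ (fun i => q i / ‖q‖) = (∑ i, ‖q i‖ ^ 2) / ‖q‖ ^ 2 := by
    simp only [dotProduct, ← sq, div_pow, Real.norm_eq_abs, sq_abs, Finset.sum_div]
  rw [this, ← EuclideanSpace.norm_sq_eq]
  exact div_self_le_one _

theorem log_norm_mul_inner_le {n : Type*} [Fintype n] (q d : EuclideanSpace ℝ n) :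
    Real.log ‖q‖ * ∑ i, d i * q i ≤ ‖d‖ * ‖q‖ * |Real.log ‖q‖| := by
  have hcs : |∑ i, d i * q i| ≤ ‖d‖ * ‖q‖ := by
    simpa [PiLp.inner_apply, mul_comm] using abs_real_inner_le_norm d q
  calc Real.log ‖q‖ * ∑ i, d i * q i
      ≤ |Real.log ‖q‖| * |∑ i, d i * q i| := by rw [← abs_mul]; exact le_abs_self _
    _ ≤ |Real.log ‖q‖| * (‖d‖ * ‖q‖) := by gcongr
    _ = ‖d‖ * ‖q‖ * |Real.log ‖q‖| := mul_comm _ _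

theorem pLaplace_implies_Pucci_structure_general {n : ℕ} (p : ℝ)
    (q d : EuclideanSpace ℝ (Fin n))
    (X Xp Xm : Matrix (Fin n) (Fin n) ℝ)
    (hX : X = Xp - Xm)
    (hXp : Xp.PosSemidef) (hXm : Xm.PosSemidef)
    (h : 0 ≤ X.trace
        + (p - 2) * (∑ i, ∑ j, X i j * (q i / ‖q‖) * (q j / ‖q‖))
        + Real.log ‖q‖ * (∑ i, d i * q i)) :
    0 ≤ max 1 (p - 1) * Xp.trace - min 1 (p - 1) * Xm.trace
        + ‖d‖ * ‖q‖ * |Real.log ‖q‖| := by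
  rw [sum_sum_mul_mul_eq_dotProduct_mulVec, hX] at h
  have hpucci := trace_add_mul_dotProduct_mulVec_le_pucci hXp hXm p
    (dotProduct_self_div_norm_le_one q)
  linarith [log_norm_mul_inner_le q d]

/-- The strong-form variable exponent p-Laplace inequality implies the
Pucci-type structure inequality: here `X` plays the role of `D²u`, `q` of `Du`, `d` of `Dp`. -/
theorem pLaplace_implies_Pucci_structure {n : ℕ} (hn : 1 ≤ n) (p : ℝ) (hp : 1 < p)
    (q d : EuclideanSpace ℝ (Fin n)) (hq : q ≠ 0)
    (X Xp Xm : Matrix (Fin n) (Fin n) ℝ)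
    (hXsymm : X.IsSymm)
    (hX : X = Xp - Xm)
    (hXp : Xp.PosSemidef) (hXm : Xm.PosSemidef) (hortho : Xp * Xm = 0)
    (h : 0 ≤ X.trace
        + (p - 2) * (∑ i, ∑ j, X i j * (q i / ‖q‖) * (q j / ‖q‖))
        + Real.log ‖q‖ * (∑ i, d i * q i)) :
    0 ≤ max 1 (p - 1) * Xp.trace - min 1 (p - 1) * Xm.trace
        + ‖d‖ * ‖q‖ * |Real.log ‖q‖| :=
  pLaplace_implies_Pucci_structure_general p q d X Xp Xm hX hXp hXm h
end

section
/- Let n ≥ 1, p ∈ (1,∞), let q, d ∈ ℝⁿ with q ≠ 0 and ⟨d, q⟩ ≠ 0, write q̂ = q/|q| and cos θ = ⟨d,q⟩/(|d||q|), and suppose (cos θ)·log|q| ≤ 0. Let X ∈ Sⁿ be decomposed as X = X⁺ − X⁻ with X⁺, X⁻ positive semidefinite and X⁺X⁻ = 0, and let λ₀, Λ₀ > 0 satisfy λ₀ ≤ min{1, p−1}/(|d|·|cos θ|) and Λ₀ ≥ max{1, p−1}/(|d|·|cos θ|). If Tr(X) + (p − 2)⟨X q̂, q̂⟩ + (log|q|)·⟨d,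 q⟩ ≥ 0, then Λ₀·Tr(X⁺) − λ₀·Tr(X⁻) − |q|·|log|q|| ≥ 0. -/
/-!
The sign condition turns the drift term `log|q| ⟨d, q⟩` into `-|log|q|| |⟨d, q⟩|`, so the
hypothesis bounds `|q| |log|q|| · |d| |cos θ|` by the normalized `p`-Laplacian
`tr X + (p - 2) ⟨X q̂, q̂⟩` of `X = X⁺ - X⁻`. As `0 ≤ ⟨M q̂, q̂⟩ ≤ tr M` for every positive
semidefinite `M`, that quantity is at most `max{1, p-1} tr X⁺ - min{1, p-1} tr X⁻`; dividing by
`|d| |cos θ|` and using the bounds on `λ₀` and `Λ₀` concludes.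
-/

open Matrix

theorem Matrix.PosSemidef.dotProduct_mulVec_le_dotProduct_mul_trace {ι : Type*} [Fintype ι]
    {M : Matrix ι ι ℝ} (hM : M.PosSemidef) (w : ι → ℝ) :
    w ⬝ᵥ M *ᵥ w ≤ (w ⬝ᵥ w) * M.trace := by
  obtain ⟨m, v, rfl⟩ := posSemidef_iff_eq_sum_vecMulVec.mp hM
  simp only [star_trivial, sum_mulVec, dotProduct_sum, trace_sum, trace_vecMulVec,
    Finset.mul_sum, vecMulVec_mulVec, op_smul_eq_smul, dotProduct_smul, smul_eq_mul]
  refine Finset.sum_le_sum fun k _ => ?_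
  rw [dotProduct_comm w, ← sq, mul_comm]
  simpa only [dotProduct, sq] using Finset.sum_mul_sq_le_sq_mul_sq Finset.univ (v k) w

theorem Matrix.sum_sum_mul_mul_eq_dotProduct_mulVec_s10 {ι : Type*} [Fintype ι]
    (M : Matrix ι ι ℝ) (w : ι → ℝ) :
    ∑ i, ∑ j, M i j * w i * w j = w ⬝ᵥ M *ᵥ w := by
  simp only [dotProduct, mulVec, Finset.mul_sum]
  exact Finset.sum_congr rfl fun i _ => Finset.sum_congr rfl fun j _ => by ring

theorem EuclideanSpace.dotProduct_div_norm_self {ι : Type*} [Fintype ι]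
    {q : EuclideanSpace ℝ ι} (hq : q ≠ 0) :
    (fun i => q i / ‖q‖) ⬝ᵥ (fun i => q i / ‖q‖) = 1 := by
  have hq' : ‖q‖ ≠ 0 := norm_ne_zero_iff.mpr hq
  simp only [dotProduct, ← sq, div_pow]
  rw [← Finset.sum_div, ← EuclideanSpace.real_norm_sq_eq, div_self (pow_ne_zero 2 hq')]

/-- The normalized `p`-Laplacian is dominated by the Pucci maximal operator with ellipticity
constants `min 1 (p - 1)` and `max 1 (p - 1)`. -/
theorem Matrix.trace_add_mul_dotProduct_mulVec_le {ι : Type*} [Fintype ι]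
    {P N : Matrix ι ι ℝ} (hP : P.PosSemidef) (hN : N.PosSemidef) {w : ι → ℝ}
    (hw : w ⬝ᵥ w = 1) (p : ℝ) :
    (P - N).trace + (p - 2) * (w ⬝ᵥ (P - N) *ᵥ w) ≤
      max 1 (p - 1) * P.trace - min 1 (p - 1) * N.trace := by
  have hP₀ : 0 ≤ w ⬝ᵥ P *ᵥ w := by simpa using hP.dotProduct_mulVec_nonneg w
  have hN₀ : 0 ≤ w ⬝ᵥ N *ᵥ w := by simpa using hN.dotProduct_mulVec_nonneg w
  have hP₁ := hP.dotProduct_mulVec_le_dotProduct_mul_trace w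
  have hN₁ := hN.dotProduct_mulVec_le_dotProduct_mul_trace w
  rw [hw, one_mul] at hP₁ hN₁
  rw [trace_sub, sub_mulVec, dotProduct_sub]
  rcases le_total p 2 with hp | hp
  · rw [max_eq_left (by linarith), min_eq_right (by linarith)]
    nlinarith
  · rw [max_eq_right (by linarith), min_eq_left (by linarith)]
    nlinarith

theorem pLaplace_implies_Pucci_structure_sign_condition_general {n : ℕ}
    (p : ℝ)
    (q d : EuclideanSpace ℝ (Fin n))
    (hdq : (∑ i, d i * q i) ≠ 0)
    (hsign : ((∑ i, d i * q i) / (‖d‖ * ‖q‖)) * Real.log ‖q‖ ≤ 0)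
    (X Xp Xm : Matrix (Fin n) (Fin n) ℝ)
    (hX : X = Xp - Xm)
    (hXp : Xp.PosSemidef) (hXm : Xm.PosSemidef)
    (lam0 Lam0 : ℝ)
    (hlam0 : lam0 ≤ min 1 (p - 1) / (‖d‖ * |(∑ i, d i * q i) / (‖d‖ * ‖q‖)|))
    (hLam0 : max 1 (p - 1) / (‖d‖ * |(∑ i, d i * q i) / (‖d‖ * ‖q‖)|) ≤ Lam0)
    (h : 0 ≤ X.trace
        + (p - 2) * (∑ i, ∑ j, X i j * (q i / ‖q‖) * (q j / ‖q‖))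
        + Real.log ‖q‖ * (∑ i, d i * q i)) :
    0 ≤ Lam0 * Xp.trace - lam0 * Xm.trace - ‖q‖ * |Real.log ‖q‖| := by
  subst hX
  set s := ∑ i, d i * q i
  set L := Real.log ‖q‖
  have hq : q ≠ 0 := by rintro rfl; simp [s] at hdq
  have hd : d ≠ 0 := by rintro rfl; simp [s] at hdq
  have hnorm : 0 < ‖d‖ * ‖q‖ := by positivity
  have hcos : ‖d‖ * |s / (‖d‖ * ‖q‖)| = |s| / ‖q‖ := by
    rw [abs_div, abs_of_pos hnorm]
    field_simp
  have hLs : L * s = -(|L| * |s|) := by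
    have hnonpos : L * s ≤ 0 := by
      have e : L * s = s / (‖d‖ * ‖q‖) * L * (‖d‖ * ‖q‖) := by field_simp
      exact e ▸ mul_nonpos_of_nonpos_of_nonneg hsign hnorm.le
    rw [← abs_mul, abs_of_nonpos hnonpos, neg_neg]
  rw [sum_sum_mul_mul_eq_dotProduct_mulVec_s10, hLs] at h
  have hpucci := trace_add_mul_dotProduct_mulVec_le hXp hXm
    (EuclideanSpace.dotProduct_div_norm_self hq) p
  rw [hcos] at hlam0 hLam0
  refine sub_nonneg.mpr ?_
  calc ‖q‖ * |L| = |L| * |s| / (|s| / ‖q‖) := by field_simp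
    _ ≤ (max 1 (p - 1) * Xp.trace - min 1 (p - 1) * Xm.trace) / (|s| / ‖q‖) := by
      gcongr; linarith
    _ = max 1 (p - 1) / (|s| / ‖q‖) * Xp.trace - min 1 (p - 1) / (|s| / ‖q‖) * Xm.trace := by
      ring
    _ ≤ Lam0 * Xp.trace - lam0 * Xm.trace := by
      gcongr
      · exact hXp.trace_nonneg
      · exact hXm.trace_nonneg

/-- Pointwise inequality for p(x)-subharmonic functions under the sign
condition `cos θ · log|q| ≤ 0`, where `cos θ = ⟨d,q⟩/(|d||q|)`: here `X` plays the role of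
`D²u`, `q` of `Du`, and `d` of `Dp`. -/
theorem pLaplace_implies_Pucci_structure_sign_condition {n : ℕ} (hn : 1 ≤ n)
    (p : ℝ) (hp : 1 < p)
    (q d : EuclideanSpace ℝ (Fin n)) (hq : q ≠ 0)
    (hdq : (∑ i, d i * q i) ≠ 0)
    (hsign : ((∑ i, d i * q i) / (‖d‖ * ‖q‖)) * Real.log ‖q‖ ≤ 0)
    (X Xp Xm : Matrix (Fin n) (Fin n) ℝ)
    (hXsymm : X.IsSymm)
    (hX : X = Xp - Xm)
    (hXp : Xp.PosSemidef) (hXm : Xm.PosSemidef) (hortho : Xp * Xm = 0)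
    (lam0 Lam0 : ℝ) (hlam0pos : 0 < lam0) (hLam0pos : 0 < Lam0)
    (hlam0 : lam0 ≤ min 1 (p - 1) / (‖d‖ * |(∑ i, d i * q i) / (‖d‖ * ‖q‖)|))
    (hLam0 : max 1 (p - 1) / (‖d‖ * |(∑ i, d i * q i) / (‖d‖ * ‖q‖)|) ≤ Lam0)
    (h : 0 ≤ X.trace
        + (p - 2) * (∑ i, ∑ j, X i j * (q i / ‖q‖) * (q j / ‖q‖))
        + Real.log ‖q‖ * (∑ i, d i * q i)) :
    0 ≤ Lam0 * Xp.trace - lam0 * Xm.trace - ‖q‖ * |Real.log ‖q‖| :=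
  pLaplace_implies_Pucci_structure_sign_condition_general p q d hdq hsign X Xp Xm hX hXp hXm lam0
    Lam0 hlam0 hLam0 h
end

section
/- Let A : [0,∞) → (0,∞) be continuous, M > 0 a constant, and ν > 0 with ν ≠ 1. Let f : [0,∞) → (0,∞) be defined by f(t) = ν^{exp(∫₀^t A(s) ds)} if ν ∈ (0,1) and f(t) = ν^{exp(−∫₀^t A(s) ds)} if ν > 1, let u(x) = ∫₀^x f(t) dt, and define p(x) = 1 + M·e^{−∫₀^x A(s) ds} if ν ∈ (0,1) and p(x) = 1 + M·e^{∫₀^x A(s) ds} if ν > 1. Then u is a classical solution of the one-dimensional variable exponent p(x)-Laplace equation: (p(x) − 1)·u''(x) + log|u'(x)|·p'(x)·u'(x) = 0 for all x > 0. -/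
open Set MeasureTheory intervalIntegral

noncomputable section

lemma aux_profile
    (A : ℝ → ℝ) (hAcont : ContinuousOn A (Ici 0))
    (M ν ε : ℝ) (hν : 0 < ν)
    (f u p : ℝ → ℝ)
    (hf : ∀ t, f t = ν ^ Real.exp (ε * ∫ s in (0 : ℝ)..t, A s))
    (hu : ∀ x, u x = ∫ t in (0 : ℝ)..x, f t)
    (hp : ∀ x, p x = 1 + M * Real.exp (-ε * ∫ s in (0 : ℝ)..x, A s)) :
    ∀ x > (0 : ℝ),
      (p x - 1) * deriv (deriv u) x + Real.log |deriv u x| * deriv p x * deriv u x = 0 := by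
  set I : ℝ → ℝ := fun t => ∫ s in (0 : ℝ)..t, A s with hIdef
  have hAint : ∀ y : ℝ, 0 ≤ y → IntervalIntegrable A volume 0 y := by
    intro y hy
    apply (hAcont.mono ?_).intervalIntegrable
    rw [uIcc_of_le hy]
    exact Icc_subset_Ici_self
  have hIcont : ∀ y : ℝ, 0 ≤ y → ContinuousOn I (Icc 0 y) := by
    intro y hy
    have := continuousOn_primitive_interval (f := A) (μ := volume) (a := 0) (b := y)
      (((hAcont.mono (by rw [uIcc_of_le hy]; exact Icc_subset_Ici_self))).integrableOn_compact
        (by rw [uIcc_of_le hy]; exact isCompact_Icc))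
    rwa [uIcc_of_le hy] at this
  have hfI : ∀ t, f t = Real.exp (Real.log ν * Real.exp (ε * I t)) := by
    intro t
    rw [hf t, Real.rpow_def_of_pos hν]
  have hfcont : ∀ y : ℝ, 0 ≤ y → ContinuousOn f (Icc 0 y) := by
    intro y hy
    have h1 : ContinuousOn (fun t => ε * I t) (Icc 0 y) := continuousOn_const.mul (hIcont y hy)
    have h2 := Real.continuous_exp.comp_continuousOn h1
    have h3 : ContinuousOn (fun t => Real.log ν * Real.exp (ε * I t)) (Icc 0 y) :=
      continuousOn_const.mul h2
    exact (Real.continuous_exp.comp_continuousOn h3).congr fun t _ => hfI t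
  -- derivative of I at points y > 0
  have hIderiv : ∀ y : ℝ, 0 < y → HasDerivAt I (A y) y := by
    intro y hy
    apply integral_hasDerivAt_right (hAint y hy.le)
    · exact ⟨Ioi 0, Ioi_mem_nhds hy,
        (hAcont.mono Ioi_subset_Ici_self).aestronglyMeasurable measurableSet_Ioi⟩
    · exact hAcont.continuousAt (Ici_mem_nhds hy)
  -- derivative of f at points y > 0
  have hfderiv : ∀ y : ℝ, 0 < y →
      HasDerivAt f (Real.exp (Real.log ν * Real.exp (ε * I y)) *
        (Real.log ν * (Real.exp (ε * I y) * (ε * A y)))) y := by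
    intro y hy
    have h1 : HasDerivAt (fun t => Real.exp (Real.log ν * Real.exp (ε * I t)))
        (Real.exp (Real.log ν * Real.exp (ε * I y)) *
          (Real.log ν * (Real.exp (ε * I y) * (ε * A y)))) y :=
      ((((hIderiv y hy).const_mul ε).exp).const_mul (Real.log ν)).exp
    exact h1.congr_of_eventuallyEq (Filter.Eventually.of_forall hfI)
  -- derivative of u equals f on Ioi 0
  have huderiv : ∀ y : ℝ, 0 < y → HasDerivAt u (f y) y := by
    intro y hy
    have hint : IntervalIntegrable f volume 0 y := by
      have : ContinuousOn f (uIcc 0 y) := by rw [uIcc_of_le hy.le]; exact hfcont y hy.le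
      exact this.intervalIntegrable
    have hd : HasDerivAt (fun x => ∫ t in (0 : ℝ)..x, f t) (f y) y := by
      apply integral_hasDerivAt_right hint
      · have hcf : ContinuousOn f (Ioi 0) :=
          fun z hz => ((hfderiv z hz).continuousAt).continuousWithinAt
        exact ⟨Ioi 0, Ioi_mem_nhds hy, hcf.aestronglyMeasurable measurableSet_Ioi⟩
      · exact (hfderiv y hy).continuousAt
    exact hd.congr_of_eventuallyEq (Filter.Eventually.of_forall hu)
  have hderivu : ∀ y : ℝ, 0 < y → deriv u y = f y := fun y hy => (huderiv y hy).deriv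
  intro x hx
  -- deriv u =ᶠ f near x
  have hev : deriv u =ᶠ[nhds x] f := by
    filter_upwards [Ioi_mem_nhds hx] with y hy using hderivu y hy
  have hderiv2 : deriv (deriv u) x =
      Real.exp (Real.log ν * Real.exp (ε * I x)) *
        (Real.log ν * (Real.exp (ε * I x) * (ε * A x))) := by
    rw [hev.deriv_eq]
    exact (hfderiv x hx).deriv
  have hpderiv : deriv p x = M * (Real.exp (-ε * I x) * (-ε * A x)) := by
    have h1 : HasDerivAt p (M * (Real.exp (-ε * I x) * (-ε * A x))) x := by
      have := ((((hIderiv x hx).const_mul (-ε)).exp).const_mul M).const_add 1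
      exact this.congr_of_eventuallyEq (Filter.Eventually.of_forall hp)
    exact h1.deriv
  have hfpos : 0 < f x := by rw [hfI]; exact Real.exp_pos _
  have hlog : Real.log |deriv u x| = Real.exp (ε * I x) * Real.log ν := by
    rw [hderivu x hx, abs_of_pos hfpos, hf x, Real.log_rpow hν]
  rw [hderiv2, hpderiv, hlog, hderivu x hx, hp x, hfI x]
  have hmul : Real.exp (-ε * I x) * Real.exp (ε * I x) = 1 := by
    rw [← Real.exp_add]; ring_nf; exact Real.exp_zero
  nlinarith [hmul, Real.exp_pos (Real.log ν * Real.exp (ε * I x))]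

/-- The profile `u(x) = ∫₀^x f(t) dt`, with
`f(t) = ν^{exp(∫₀^t A)}` (for `ν ∈ (0,1)`) or `f(t) = ν^{exp(−∫₀^t A)}` (for `ν > 1`),
is a classical solution of the one-dimensional variable exponent p(x)-Laplace equation with
exponent `p(x) = 1 + M e^{−∫₀^x A}` resp. `p(x) = 1 + M e^{∫₀^x A}`. -/
theorem slowest_growing_px_harmonic_profile
    (A : ℝ → ℝ) (hAcont : ContinuousOn A (Ici 0)) (hApos : ∀ t ∈ Ici (0 : ℝ), 0 < A t)
    (M ν : ℝ) (hM : 0 < M) (hν : 0 < ν) (hν1 : ν ≠ 1)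
    (f u p : ℝ → ℝ)
    (hf : ∀ t, f t = if ν < 1 then ν ^ Real.exp (∫ s in (0 : ℝ)..t, A s)
                     else ν ^ Real.exp (-∫ s in (0 : ℝ)..t, A s))
    (hu : ∀ x, u x = ∫ t in (0 : ℝ)..x, f t)
    (hp : ∀ x, p x = if ν < 1 then 1 + M * Real.exp (-∫ s in (0 : ℝ)..x, A s)
                     else 1 + M * Real.exp (∫ s in (0 : ℝ)..x, A s)) :
    ∀ x > (0 : ℝ),
      (p x - 1) * deriv (deriv u) x + Real.log |deriv u x| * deriv p x * deriv u x = 0 := by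
  by_cases h : ν < 1
  · exact aux_profile A hAcont M ν 1 hν f u p
      (fun t => by rw [hf t, if_pos h, one_mul])
      hu (fun x => by rw [hp x, if_pos h]; norm_num)
  · exact aux_profile A hAcont M ν (-1) hν f u p
      (fun t => by rw [hf t, if_neg h, neg_one_mul])
      hu (fun x => by rw [hp x, if_neg h]; norm_num)
end
end
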